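/- With notation as in the recursion for C(g,n), for stable (g,n) with n ≥ 1 one has C(g,n) ≤ 9 · (5g - 5 + 3n)! · e^(4g - 4 + 3n) · 80^(2g - 2 + n) · 3^(3 - 3g - 3n) · 14^(-g), and equivalently C(g,n) ≤ 9 · (5g - 5 + 3n)! · e^(4g - 4 + 3n) · 3^(5g - 5 + n) · 14^(-g). -/

import Mathlib

/-!
The bound `B(g, n) = 9 · (5g + 3n - 5)! · w(g, n)` is proved by induction on `2g + n`, where
`w(g, n) = e^(4g-4+3n) · 80^(2g-2+n) · 3^(3-3g-3n) · 14^(-g)`. The two coefficients of the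
recursion are controlled through `(1 + a/c)^c ≤ e^a`: the first by `e (D + 1)`, the second by
`(2D + 1)³ e³ / 27`. Since `w` is an exponential in `g` and `n`, the weights of the three terms
of the recursion (the genus-reducing term, the splitting sum and the `C(g, n)` term)
all reduce to `w(g, n + 1)` times a constant, and the resulting factorial inequalities leave
them at most `7/40`, `27/400` and `1/5` of `B(g, n + 1)`, which sum to less than `1`.
The second form of the bound follows from `80 ≤ 81 = 3⁴`.
-/

open Real Finset
open scoped Nat

noncomputable section

lemma natCast_add_pow_le_exp_mul_pow {n : ℕ} (hn : 0 < n) {a : ℝ} (ha : -(n : ℝ) ≤ a) :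
    ((n : ℝ) + a) ^ n ≤ exp a * (n : ℝ) ^ n := by
  have hn' : (0 : ℝ) < n := by exact_mod_cast hn
  have h := one_sub_div_pow_le_exp_neg (n := n) (t := -a) (by linarith)
  rw [neg_neg, neg_div, sub_neg_eq_add] at h
  calc ((n : ℝ) + a) ^ n = (n : ℝ) ^ n * (1 + a / n) ^ n := by
        rw [← mul_pow, mul_add, mul_one, mul_div_cancel₀ _ hn'.ne']
    _ ≤ (n : ℝ) ^ n * exp a := by gcongr
    _ = exp a * (n : ℝ) ^ n := mul_comm _ _

def recCoeff₁ (D : ℕ) : ℝ := ((D : ℝ) + 1) ^ (D + 1) / (D : ℝ) ^ D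

def recCoeff₂ (D : ℕ) : ℝ :=
  (2 * (D : ℝ) + 1) ^ (2 * D + 1) / (27 * (2 * (D : ℝ) - 2) ^ (2 * D - 2))

lemma recCoeff₁_nonneg (D : ℕ) : 0 ≤ recCoeff₁ D := by unfold recCoeff₁; positivity

lemma recCoeff₁_le {D : ℕ} (hD : 0 < D) : recCoeff₁ D ≤ exp 1 * ((D : ℝ) + 1) := by
  have hpow :=
    natCast_add_pow_le_exp_mul_pow hD (a := 1) (by linarith [D.cast_nonneg (α := ℝ)])
  rw [recCoeff₁, div_le_iff₀ (by positivity), pow_succ]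
  calc ((D : ℝ) + 1) ^ D * (D + 1) ≤ exp 1 * (D : ℝ) ^ D * (D + 1) := by gcongr
    _ = _ := by ring

lemma recCoeff₂_nonneg {D : ℕ} (hD : 1 ≤ D) : 0 ≤ recCoeff₂ D := by
  have : (1 : ℝ) ≤ D := by exact_mod_cast hD
  unfold recCoeff₂
  have : (0 : ℝ) ≤ 2 * D - 2 := by linarith
  positivity

lemma recCoeff₂_le {D : ℕ} (hD : 2 ≤ D) :
    recCoeff₂ D ≤ (2 * (D : ℝ) + 1) ^ 3 * exp 1 ^ 3 / 27 := by
  obtain ⟨c, rfl⟩ : ∃ c, D = c + 1 := ⟨D - 1, by omega⟩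
  have hc : 0 < 2 * c := by omega
  have hpow :=
    natCast_add_pow_le_exp_mul_pow hc (a := 3) (by linarith [c.cast_nonneg (α := ℝ)])
  have hbase : 2 * ((c + 1 : ℕ) : ℝ) + 1 = ((2 * c : ℕ) : ℝ) + 3 := by push_cast; ring
  have hbase' : 2 * ((c + 1 : ℕ) : ℝ) - 2 = ((2 * c : ℕ) : ℝ) := by push_cast; ring
  rw [recCoeff₂, hbase, hbase', show 2 * (c + 1) + 1 = 2 * c + 3 by ring,
    show 2 * (c + 1) - 2 = 2 * c by omega, div_le_iff₀ (by positivity), pow_add,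
    ← exp_nat_mul]
  calc (((2 * c : ℕ) : ℝ) + 3) ^ (2 * c) * (((2 * c : ℕ) : ℝ) + 3) ^ 3
      ≤ exp 3 * ((2 * c : ℕ) : ℝ) ^ (2 * c) * (((2 * c : ℕ) : ℝ) + 3) ^ 3 := by gcongr
    _ = _ := by push_cast; field_simp

def powProd (a b c d : ℤ) : ℝ := exp 1 ^ a * 80 ^ b * 3 ^ c * 14 ^ d

lemma powProd_pos (a b c d : ℤ) : 0 < powProd a b c d := by unfold powProd; positivity

lemma powProd_mul (a b c d a' b' c' d' : ℤ) :
    powProd a b c d * powProd a' b' c' d' = powProd (a + a') (b + b') (c + c') (d + d') := by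
  simp only [powProd, zpow_add₀ (exp_pos 1).ne', zpow_add₀ (by norm_num : (80 : ℝ) ≠ 0),
    zpow_add₀ (by norm_num : (3 : ℝ) ≠ 0), zpow_add₀ (by norm_num : (14 : ℝ) ≠ 0)]
  ring

def weight (g n : ℕ) : ℝ :=
  powProd (4 * (g : ℤ) - 4 + 3 * n) (2 * (g : ℤ) - 2 + n) (3 - 3 * (g : ℤ) - 3 * n) (-(g : ℤ))

lemma weight_pos (g n : ℕ) : 0 < weight g n := powProd_pos _ _ _ _

lemma weight_mul_exp_pow_three (g n : ℕ) :
    weight g n * exp 1 ^ 3 = weight g (n + 1) * (27 / 80) := by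
  have h₁ : exp 1 ^ 3 = powProd 3 0 0 0 := by simp [powProd]
  have h₂ : (27 / 80 : ℝ) = powProd 0 (-1) 3 0 := by norm_num [powProd]
  rw [h₁, h₂, weight, weight, powProd_mul, powProd_mul]
  congr 1 <;> push_cast <;> ring

lemma weight_mul_exp (g n : ℕ) :
    weight g (n + 2) * exp 1 = weight (g + 1) (n + 1) * (14 / 80) := by
  have h₁ : exp 1 = powProd 1 0 0 0 := by simp [powProd]
  have h₂ : (14 / 80 : ℝ) = powProd 0 (-1) 0 1 := by norm_num [powProd]
  rw [h₁, h₂, weight, weight, powProd_mul, powProd_mul]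
  congr 1 <;> push_cast <;> ring

lemma weight_mul_weight_mul_exp {g n g₁ n₁ : ℕ} (hg : g₁ ≤ g) (hn : n₁ ≤ n) :
    weight g₁ (n₁ + 1) * weight (g - g₁) (n - n₁ + 1) * exp 1 = weight g (n + 1) / 80 := by
  have h₁ : exp 1 = powProd 1 0 0 0 := by simp [powProd]
  have h₂ : (80 : ℝ)⁻¹ = powProd 0 (-1) 0 0 := by norm_num [powProd]
  rw [h₁, div_eq_mul_inv, h₂, weight, weight, weight, powProd_mul, powProd_mul, powProd_mul]
  congr 1 <;> omega

namespace Nat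

lemma factorial_mul_factorial_le {a b k : ℕ} (ha : k ≤ a) (hb : k ≤ b) :
    a ! * b ! ≤ k ! * (a + b - k)! := by
  induction b, hb using Nat.le_induction with
  | base => rw [Nat.add_sub_cancel, mul_comm]
  | succ b hkb ih =>
    rw [show a + (b + 1) - k = (a + b - k) + 1 by omega, factorial_succ, factorial_succ]
    calc a ! * ((b + 1) * b !) = (b + 1) * (a ! * b !) := by ring
      _ ≤ (a + b - k + 1) * (k ! * (a + b - k)!) := by gcongr; omega
      _ = k ! * ((a + b - k + 1) * (a + b - k)!) := by ring

lemma mul_mul_factorial_le_factorial_add_two {a b m : ℕ} (ha : a ≤ m + 1) (hb : b ≤ m + 2) :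
    a * b * m ! ≤ (m + 2)! := by
  calc a * b * m ! ≤ (m + 1) * (m + 2) * m ! := by gcongr
    _ = (m + 2)! := by simp only [factorial_succ]; ring

lemma ten_mul_mul_mul_factorial_le {a b c m : ℕ} (ha : a ≤ m + 3) (hb : b ≤ m + 4)
    (hc : c ≤ m + 6) : 10 * a * b * c * (m + 1)! ≤ (m + 6)! := by
  calc 10 * a * b * c * (m + 1)!
      ≤ ((m + 2) * (m + 5)) * (m + 3) * (m + 4) * (m + 6) * (m + 1)! := by gcongr; nlinarith
    _ = (m + 6)! := by simp only [factorial_succ]; ring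

lemma pow_three_mul_factorial_le (m : ℕ) : (2 * m + 9) ^ 3 * (m + 3)! ≤ 8 * (m + 6)! := by
  calc (2 * m + 9) ^ 3 * (m + 3)! ≤ 8 * ((m + 6) * (m + 5) * (m + 4)) * (m + 3)! := by
        gcongr; ring_nf; omega
    _ = 8 * (m + 6)! := by simp only [factorial_succ]; ring

end Nat

def bound (g n : ℕ) : ℝ := 9 * (5 * g + 3 * n - 5)! * weight g n

lemma bound_nonneg (g n : ℕ) : 0 ≤ bound g n := by
  have := weight_pos g n
  unfold bound; positivity

lemma one_le_bound_zero_three : 1 ≤ bound 0 3 := by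
  have h : 1 ≤ exp 5 := one_le_exp (by norm_num)
  norm_num [bound, weight, powProd, Nat.factorial]
  linarith

lemma one_le_bound_one_one : 1 ≤ bound 1 1 := by
  have h : 1 ≤ exp 3 := one_le_exp (by norm_num)
  norm_num [bound, weight, powProd, Nat.factorial]
  linarith

lemma bound_genus (g n : ℕ) :
    ((n : ℝ) + 1) * bound g (n + 2) * (exp 1 * ((3 * (g + 1) + 2 * n : ℕ) : ℝ)) ≤
      7 / 40 * bound (g + 1) (n + 1) := by
  have hfac : (n + 1) * (3 * (g + 1) + 2 * n) * (5 * g + 3 * (n + 2) - 5)! ≤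
      (5 * (g + 1) + 3 * (n + 1) - 5)! := by
    rw [show 5 * (g + 1) + 3 * (n + 1) - 5 = (5 * g + 3 * (n + 2) - 5) + 2 by omega]
    exact Nat.mul_mul_factorial_le_factorial_add_two (by omega) (by omega)
  have hfac' := (Nat.cast_le (α := ℝ)).2 hfac
  push_cast at hfac'
  have hw := weight_pos (g + 1) (n + 1)
  calc ((n : ℝ) + 1) * bound g (n + 2) * (exp 1 * ((3 * (g + 1) + 2 * n : ℕ) : ℝ))
      = 9 * (14 / 80) *
          (((n : ℝ) + 1) * (3 * (g + 1) + 2 * n) * (5 * g + 3 * (n + 2) - 5)!) *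
          weight (g + 1) (n + 1) := by
        rw [bound]; push_cast
        linear_combination (9 * ((n : ℝ) + 1) * (3 * (g + 1) + 2 * n) *
          (5 * g + 3 * (n + 2) - 5)!) * weight_mul_exp g n
    _ ≤ 9 * (14 / 80) * (5 * (g + 1) + 3 * (n + 1) - 5)! * weight (g + 1) (n + 1) := by
        gcongr
    _ = 7 / 40 * bound (g + 1) (n + 1) := by rw [bound]; ring

lemma bound_split {g n g₁ n₁ : ℕ} (hg : g₁ ≤ g) (hn : n₁ ≤ n) (h₁ : 2 ≤ 2 * g₁ + n₁)
    (h₂ : 2 ≤ 2 * (g - g₁) + (n - n₁)) :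
    bound g₁ (n₁ + 1) * bound (g - g₁) (n - n₁ + 1) * exp 1 ≤
      243 / 40 * (5 * g + 3 * n - 7)! * weight g (n + 1) := by
  have hfac := Nat.factorial_mul_factorial_le (k := 3) (a := 5 * g₁ + 3 * (n₁ + 1) - 5)
    (b := 5 * (g - g₁) + 3 * (n - n₁ + 1) - 5) (by omega) (by omega)
  rw [show 5 * g₁ + 3 * (n₁ + 1) - 5 + (5 * (g - g₁) + 3 * (n - n₁ + 1) - 5) - 3 =
    5 * g + 3 * n - 7 by omega] at hfac
  have hfac' := (Nat.cast_le (α := ℝ)).2 hfac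
  push_cast at hfac'
  have hw := weight_pos g (n + 1)
  calc bound g₁ (n₁ + 1) * bound (g - g₁) (n - n₁ + 1) * exp 1
      = 81 / 80 *
          ((5 * g₁ + 3 * (n₁ + 1) - 5)! * (5 * (g - g₁) + 3 * (n - n₁ + 1) - 5)! : ℝ) *
          weight g (n + 1) := by
        rw [bound, bound]
        linear_combination (81 * ((5 * g₁ + 3 * (n₁ + 1) - 5)! : ℝ) *
          (5 * (g - g₁) + 3 * (n - n₁ + 1) - 5)!) * weight_mul_weight_mul_exp hg hn
    _ ≤ 81 / 80 * (3 ! * (5 * g + 3 * n - 7)! : ℝ) * weight g (n + 1) := by gcongr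
    _ = 243 / 40 * (5 * g + 3 * n - 7)! * weight g (n + 1) := by
        rw [show ((3 ! : ℕ) : ℝ) = 6 by norm_num [Nat.factorial]]; ring

lemma bound_self {g n : ℕ} (hs : 3 ≤ 2 * g + n) :
    2 * bound g n * ((2 * ((3 * g + 2 * n - 1 : ℕ) : ℝ) + 1) ^ 3 * exp 1 ^ 3 / 27) ≤
      1 / 5 * bound g (n + 1) := by
  obtain ⟨m, hm⟩ : ∃ m, 5 * g + 3 * n = m + 8 := ⟨5 * g + 3 * n - 8, by omega⟩
  have hD : 2 * ((3 * g + 2 * n - 1 : ℕ) : ℝ) + 1 ≤ 2 * m + 9 := by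
    have : 2 * (3 * g + 2 * n - 1) + 1 ≤ 2 * m + 9 := by omega
    exact_mod_cast this
  have hfac := (Nat.cast_le (α := ℝ)).2 (Nat.pow_three_mul_factorial_le m)
  push_cast at hfac
  have hw := weight_pos g (n + 1)
  rw [bound, bound, show 5 * g + 3 * n - 5 = m + 3 by omega,
    show 5 * g + 3 * (n + 1) - 5 = m + 6 by omega]
  calc 2 * (9 * ((m + 3)! : ℝ) * weight g n) *
        ((2 * ((3 * g + 2 * n - 1 : ℕ) : ℝ) + 1) ^ 3 * exp 1 ^ 3 / 27)
      = 9 / 40 * ((2 * ((3 * g + 2 * n - 1 : ℕ) : ℝ) + 1) ^ 3 * (m + 3)!) *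
          weight g (n + 1) := by
        linear_combination (2 * 9 / 27 * ((m + 3)! : ℝ) *
          (2 * ((3 * g + 2 * n - 1 : ℕ) : ℝ) + 1) ^ 3) * weight_mul_exp_pow_three g n
    _ ≤ 9 / 40 * ((2 * (m : ℝ) + 9) ^ 3 * (m + 3)!) * weight g (n + 1) := by gcongr
    _ ≤ 9 / 40 * (8 * (m + 6)! : ℝ) * weight g (n + 1) := by gcongr
    _ = 1 / 5 * (9 * ((m + 6)! : ℝ) * weight g (n + 1)) := by ring

def stableSplits (g n : ℕ) : Finset (ℕ × ℕ) :=
  ((range (g + 1)) ×ˢ (range (n + 1))).filter (fun p : ℕ × ℕ =>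
    0 < 2 * (p.1 : ℤ) - 2 + (p.2 + 1) ∧ 0 < 2 * ((g : ℤ) - p.1) - 2 + ((n : ℤ) - p.2 + 1))

lemma card_stableSplits_le (g n : ℕ) : #(stableSplits g n) ≤ (g + 1) * (n + 1) :=
  (card_filter_le _ _).trans (by rw [card_product, card_range, card_range])

lemma le_of_mem_stableSplits {g n : ℕ} {p : ℕ × ℕ} (hp : p ∈ stableSplits g n) :
    p.1 ≤ g ∧ p.2 ≤ n ∧ 2 ≤ 2 * p.1 + p.2 ∧ 2 ≤ 2 * (g - p.1) + (n - p.2) := by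
  simp only [stableSplits, mem_filter, mem_product, mem_range] at hp
  omega

def genusTerm (C : ℕ → ℕ → ℝ) (g n : ℕ) : ℝ :=
  ((n : ℝ) + 1) * if g = 0 then 0 else C (g - 1) (n + 2)

def splitTerm (C : ℕ → ℕ → ℝ) (g n : ℕ) : ℝ :=
  ∑ p ∈ stableSplits g n, C p.1 (p.2 + 1) * C (g - p.1) (n - p.2 + 1)

def BoundedUpTo (C : ℕ → ℕ → ℝ) (m : ℕ) : Prop :=
  ∀ g n, 2 * g + n ≤ m → 1 ≤ n → 3 ≤ 2 * g + n → 0 ≤ C g n ∧ C g n ≤ bound g n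

section Step

variable {C : ℕ → ℕ → ℝ} {g n : ℕ}

lemma genusTerm_bound (hC : BoundedUpTo C (2 * g + n)) (hs : 3 ≤ 2 * g + n) :
    0 ≤ genusTerm C g n ∧
      genusTerm C g n * (exp 1 * ((3 * g + 2 * n : ℕ) : ℝ)) ≤ 7 / 40 * bound g (n + 1) := by
  cases g with
  | zero =>
    simp only [genusTerm, ↓reduceIte, mul_zero, zero_mul]
    exact ⟨le_rfl, mul_nonneg (by norm_num) (bound_nonneg _ _)⟩
  | succ g =>
    simp only [genusTerm, Nat.add_one_ne_zero, if_false, Nat.add_sub_cancel]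
    obtain ⟨hC₀, hC₁⟩ := hC g (n + 2) (by omega) (by omega) (by omega)
    refine ⟨by positivity, le_trans ?_ (bound_genus g n)⟩
    gcongr

lemma splitTerm_mul_exp_le (hC : BoundedUpTo C (2 * g + n)) :
    0 ≤ splitTerm C g n ∧ splitTerm C g n * exp 1 ≤
      (g + 1) * (n + 1) * (243 / 40 * (5 * g + 3 * n - 7)! * weight g (n + 1)) := by
  have hterm : ∀ p ∈ stableSplits g n, 0 ≤ C p.1 (p.2 + 1) * C (g - p.1) (n - p.2 + 1) ∧
      C p.1 (p.2 + 1) * C (g - p.1) (n - p.2 + 1) * exp 1 ≤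
        243 / 40 * (5 * g + 3 * n - 7)! * weight g (n + 1) := by
    intro p hp
    obtain ⟨hg, hn, h₁, h₂⟩ := le_of_mem_stableSplits hp
    obtain ⟨hC₁, hC₁'⟩ := hC p.1 (p.2 + 1) (by omega) (by omega) (by omega)
    obtain ⟨hC₂, hC₂'⟩ := hC (g - p.1) (n - p.2 + 1) (by omega) (by omega) (by omega)
    refine ⟨mul_nonneg hC₁ hC₂, le_trans ?_ (bound_split hg hn h₁ h₂)⟩
    gcongr
    exact bound_nonneg _ _
  refine ⟨sum_nonneg fun p hp => (hterm p hp).1, ?_⟩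
  calc splitTerm C g n * exp 1
      = ∑ p ∈ stableSplits g n, C p.1 (p.2 + 1) * C (g - p.1) (n - p.2 + 1) * exp 1 :=
        sum_mul ..
    _ ≤ #(stableSplits g n) • (243 / 40 * (5 * g + 3 * n - 7)! * weight g (n + 1)) :=
        sum_le_card_nsmul _ _ _ fun p hp => (hterm p hp).2
    _ ≤ _ := by
        rw [nsmul_eq_mul]
        have := weight_pos g (n + 1)
        gcongr
        exact_mod_cast card_stableSplits_le g n

lemma splitTerm_bound (hC : BoundedUpTo C (2 * g + n)) (hs : 3 ≤ 2 * g + n) :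
    0 ≤ splitTerm C g n ∧
      splitTerm C g n * (exp 1 * ((3 * g + 2 * n : ℕ) : ℝ)) ≤ 27 / 400 * bound g (n + 1) := by
  obtain ⟨hS₀, hS⟩ := splitTerm_mul_exp_le hC
  obtain ⟨m, hm⟩ : ∃ m, 5 * g + 3 * n = m + 8 := ⟨5 * g + 3 * n - 8, by omega⟩
  have hfac := (Nat.cast_le (α := ℝ)).2 <| Nat.ten_mul_mul_mul_factorial_le (m := m)
    (a := g + 1) (b := n + 1) (c := 3 * g + 2 * n) (by omega) (by omega) (by omega)
  push_cast at hfac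
  have hw := weight_pos g (n + 1)
  refine ⟨hS₀, ?_⟩
  rw [bound, show 5 * g + 3 * (n + 1) - 5 = m + 6 by omega]
  rw [show 5 * g + 3 * n - 7 = m + 1 by omega] at hS
  calc splitTerm C g n * (exp 1 * ((3 * g + 2 * n : ℕ) : ℝ))
      = splitTerm C g n * exp 1 * ((3 * g + 2 * n : ℕ) : ℝ) := by ring
    _ ≤ (g + 1) * (n + 1) * (243 / 40 * (m + 1)! * weight g (n + 1)) * (3 * g + 2 * n : ℕ) := by
        gcongr
    _ = 243 / 400 * (10 * (g + 1) * (n + 1) * (3 * g + 2 * n) * (m + 1)!) *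
          weight g (n + 1) := by
        push_cast; ring
    _ ≤ 243 / 400 * (m + 6)! * weight g (n + 1) := by gcongr
    _ = 27 / 400 * (9 * (m + 6)! * weight g (n + 1)) := by ring

lemma selfTerm_bound (h0 : ∀ g, C g 0 = 0) (hC : BoundedUpTo C (2 * g + n))
    (hs : 3 ≤ 2 * g + n) :
    0 ≤ C g n ∧ 2 * C g n * ((2 * ((3 * g + 2 * n - 1 : ℕ) : ℝ) + 1) ^ 3 * exp 1 ^ 3 / 27) ≤
      1 / 5 * bound g (n + 1) := by
  obtain ⟨hC₀, hC₁⟩ : 0 ≤ C g n ∧ C g n ≤ bound g n := by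
    rcases Nat.eq_zero_or_pos n with rfl | hn
    · exact ⟨(h0 g).ge, (h0 g).trans_le (bound_nonneg g 0)⟩
    · exact hC g n le_rfl hn hs
  refine ⟨hC₀, le_trans ?_ (bound_self hs)⟩
  gcongr

lemma bounded_succ
    (hrec : C g (n + 1) = (genusTerm C g n + splitTerm C g n) * recCoeff₁ (3 * g + 2 * n - 1) +
      2 * C g n * recCoeff₂ (3 * g + 2 * n - 1))
    (h0 : ∀ g, C g 0 = 0) (hC : BoundedUpTo C (2 * g + n)) (hs : 3 ≤ 2 * g + n) :
    0 ≤ C g (n + 1) ∧ C g (n + 1) ≤ bound g (n + 1) := by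
  have hD : ((3 * g + 2 * n - 1 : ℕ) : ℝ) + 1 = ((3 * g + 2 * n : ℕ) : ℝ) := by
    rw [← Nat.cast_add_one, Nat.sub_add_cancel (by omega)]
  have hP := recCoeff₁_le (D := 3 * g + 2 * n - 1) (by omega)
  rw [hD] at hP
  have hP₀ := recCoeff₁_nonneg (3 * g + 2 * n - 1)
  have hQ := recCoeff₂_le (D := 3 * g + 2 * n - 1) (by omega)
  have hQ₀ := recCoeff₂_nonneg (D := 3 * g + 2 * n - 1) (by omega)
  obtain ⟨hA₀, hA⟩ := genusTerm_bound hC hs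
  obtain ⟨hS₀, hS⟩ := splitTerm_bound hC hs
  obtain ⟨hC₀, hC₁⟩ := selfTerm_bound h0 hC hs
  have hB := bound_nonneg g (n + 1)
  rw [hrec]
  refine ⟨by positivity, ?_⟩
  calc (genusTerm C g n + splitTerm C g n) * recCoeff₁ (3 * g + 2 * n - 1) +
        2 * C g n * recCoeff₂ (3 * g + 2 * n - 1)
      ≤ genusTerm C g n * (exp 1 * ((3 * g + 2 * n : ℕ) : ℝ)) +
          splitTerm C g n * (exp 1 * ((3 * g + 2 * n : ℕ) : ℝ)) +
          2 * C g n * ((2 * ((3 * g + 2 * n - 1 : ℕ) : ℝ) + 1) ^ 3 * exp 1 ^ 3 / 27) := by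
        rw [add_mul]; gcongr
    _ ≤ bound g (n + 1) := by linarith

end Step

def SatisfiesRecursion (C : ℕ → ℕ → ℝ) : Prop :=
  ∀ g n, 3 ≤ 2 * g + n → C g (n + 1) =
    (genusTerm C g n + splitTerm C g n) * recCoeff₁ (3 * g + 2 * n - 1) +
      2 * C g n * recCoeff₂ (3 * g + 2 * n - 1)

theorem boundedUpTo_of_satisfiesRecursion {C : ℕ → ℕ → ℝ} (hrec : SatisfiesRecursion C)
    (h03 : C 0 3 = 1) (h11 : C 1 1 = 1) (h0 : ∀ g, C g 0 = 0) (m : ℕ) : BoundedUpTo C m := by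
  induction m with
  | zero => intro g n _ _ _; omega
  | succ m ih =>
    intro g n hm hn hs
    rcases Nat.lt_or_ge (2 * g + n) (m + 1) with hlt | hge
    · exact ih g n (by omega) hn hs
    rcases Nat.lt_or_ge m 3 with hm3 | hm3
    · obtain ⟨rfl, rfl⟩ | ⟨rfl, rfl⟩ : (g = 0 ∧ n = 3) ∨ (g = 1 ∧ n = 1) := by omega
      · exact h03 ▸ ⟨zero_le_one, one_le_bound_zero_three⟩
      · exact h11 ▸ ⟨zero_le_one, one_le_bound_one_one⟩
    · obtain ⟨n, rfl⟩ : ∃ k, n = k + 1 := ⟨n - 1, by omega⟩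
      exact bounded_succ (hrec g n (by omega)) h0 (fun g' n' _ => ih g' n' (by omega)) (by omega)

lemma eighty_zpow_mul_three_zpow_le {k : ℤ} (hk : 0 ≤ k) (c : ℤ) :
    (80 : ℝ) ^ k * 3 ^ c ≤ 3 ^ (4 * k + c) := by
  lift k to ℕ using hk
  rw [zpow_add₀ three_ne_zero, zpow_mul, zpow_natCast, zpow_natCast]
  gcongr
  norm_num

lemma weight_le {g n : ℕ} (h : 0 ≤ 2 * (g : ℤ) - 2 + n) :
    weight g n ≤
      exp 1 ^ (4 * (g : ℤ) - 4 + 3 * n) * 3 ^ (5 * (g : ℤ) - 5 + n) * 14 ^ (-(g : ℤ)) := by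
  rw [weight, powProd,
    show 5 * (g : ℤ) - 5 + n = 4 * (2 * g - 2 + n) + (3 - 3 * g - 3 * n) by ring]
  gcongr ?_ * _
  rw [mul_assoc]
  gcongr
  exact eighty_zpow_mul_three_zpow_le h _

end

/-- The second factorial bound on the sequence `C g n` from the topological-recursion
bound recursion, together with its equivalent rewriting. -/
theorem stmt_15 (C : ℕ → ℕ → ℝ)
    (h03 : C 0 3 = 1) (h11 : C 1 1 = 1) (h0 : ∀ g, C g 0 = 0)
    (hrec : ∀ g n : ℕ, 2 < 2 * g + n →
      C g (n + 1) =
        (((n : ℝ) + 1) * (if g = 0 then 0 else C (g - 1) (n + 2)) +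
            ∑ p ∈ ((Finset.range (g + 1)) ×ˢ (Finset.range (n + 1))).filter
              (fun p : ℕ × ℕ =>
                0 < 2 * (p.1 : ℤ) - 2 + (p.2 + 1) ∧
                  0 < 2 * ((g : ℤ) - p.1) - 2 + ((n : ℤ) - p.2 + 1)),
              C p.1 (p.2 + 1) * C (g - p.1) (n - p.2 + 1)) *
          (((3 * g + 2 * n - 1 : ℕ) : ℝ) + 1) ^ (3 * g + 2 * n - 1 + 1) /
            ((3 * g + 2 * n - 1 : ℕ) : ℝ) ^ (3 * g + 2 * n - 1) +
        2 * C g n *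
          (2 * ((3 * g + 2 * n - 1 : ℕ) : ℝ) + 1) ^ (2 * (3 * g + 2 * n - 1) + 1) /
            (27 * (2 * ((3 * g + 2 * n - 1 : ℕ) : ℝ) - 2) ^ (2 * (3 * g + 2 * n - 1) - 2))) :
    ∀ g n : ℕ, 1 ≤ n → 0 < 2 * (g : ℤ) - 2 + n →
      C g n ≤
        9 * Nat.factorial (5 * g + 3 * n - 5) *
          Real.exp 1 ^ (4 * (g : ℤ) - 4 + 3 * n) *
          (80 : ℝ) ^ (2 * (g : ℤ) - 2 + n) *
          (3 : ℝ) ^ (3 - 3 * (g : ℤ) - 3 * n) *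
          (14 : ℝ) ^ (-(g : ℤ)) ∧
      C g n ≤
        9 * Nat.factorial (5 * g + 3 * n - 5) *
          Real.exp 1 ^ (4 * (g : ℤ) - 4 + 3 * n) *
          (3 : ℝ) ^ (5 * (g : ℤ) - 5 + n) *
          (14 : ℝ) ^ (-(g : ℤ)) := by
  intro g n hn hstab
  have hrec' : SatisfiesRecursion C := fun g n hs => by
    rw [hrec g n (by omega), mul_div_assoc, mul_div_assoc]
    rfl
  have hC : C g n ≤ bound g n :=
    (boundedUpTo_of_satisfiesRecursion hrec' h03 h11 h0 _ g n le_rfl hn (by omega)).2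
  refine ⟨hC.trans_eq (by rw [bound, weight, powProd]; ring), hC.trans ?_⟩
  exact (mul_le_mul_of_nonneg_left (weight_le hstab.le) (by positivity)).trans_eq (by ring)
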